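/- Let q ∈ L¹[0,1] be real-valued, α, β real constants not both zero, and suppose the first eigenvalue λ₀ of the anti-periodic problem -y''+qy=λy, y(1)=-y(0), y'(1)=-y'(0) satisfies λ₀ = π² + (2/(α²+β²)) ∫₀¹ q(x)(α sin πx + β cos πx)² dx. Then q(x) = (2/(α²+β²)) ∫₀¹ q(s)(α sin πs + β cos πs)² ds almost everywhere. -/

import Mathlib

open MeasureTheory intervalIntegral Complex

/-- The (real-valued) Rayleigh quotient of `y` for the operator `-y'' + q y` on `[0,1]`. -/
noncomputable def rayleighQuotientR (q : ℝ → ℝ) (y : ℝ → ℂ) : ℝ :=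
  (∫ x in (0:ℝ)..1,
      ((-(starRingEnd ℂ) (y x) * deriv (deriv y) x).re + q x * ‖y x‖^2)) /
  (∫ x in (0:ℝ)..1, ‖y x‖^2)

def AntiPeriodicBC (y : ℝ → ℂ) : Prop := y 1 = -y 0 ∧ deriv y 1 = -deriv y 0

def IsEigenfunction (q : ℝ → ℝ) (lam : ℝ) (y : ℝ → ℂ) : Prop :=
  ContDiff ℝ 2 y ∧ (∃ x ∈ Set.Icc (0:ℝ) 1, y x ≠ 0) ∧ AntiPeriodicBC y ∧
  ∀ᵐ x, x ∈ Set.Icc (0:ℝ) 1 → -deriv (deriv y) x + (q x : ℂ) * y x = (lam : ℂ) * y x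

def IsEigenvalue (q : ℝ → ℝ) (lam : ℝ) : Prop := ∃ y, IsEigenfunction q lam y

def IsFirstEigenvalue (q : ℝ → ℝ) (lam0 : ℝ) : Prop :=
  IsEigenvalue q lam0 ∧ ∀ lam, IsEigenvalue q lam → lam0 ≤ lam

/-! The function `y = α sin πx + β cos πx` satisfies `-y'' = π² y` and the anti-periodic boundary
conditions, so the hypothesis on `λ₀` says exactly that the Rayleigh quotient of `y` equals `λ₀`:
`y` minimises the Rayleigh quotient. For `g` smooth and supported in `(0, 1)`, the numerator of the
quotient of `y + t g` minus `λ₀` times its denominator is a quadratic polynomial in `t` that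
vanishes at `0` and is nonnegative near `0`. By Green's identity its linear coefficient is
`2 ∫ (q - c) y g` with `c = λ₀ - π²`, so this integral vanishes for all such `g`. Hence
`(q - c) y = 0` almost everywhere, and `y` has only countably many zeros. -/

open scoped ContDiff Real

lemma eq_zero_of_isLocalMin_quadratic {b c : ℝ}
    (h : IsLocalMin (fun t : ℝ => t * b + t ^ 2 * c) 0) : b = 0 := by
  refine h.hasDerivAt_eq_zero ?_
  simpa using ((hasDerivAt_id' (0:ℝ)).mul_const b).fun_add ((hasDerivAt_pow 2 (0:ℝ)).mul_const c)

lemma intervalIntegral.integral_add_mul_add_sq_mul {f₀ f₁ f₂ : ℝ → ℝ} {a b : ℝ}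
    (h₀ : IntervalIntegrable f₀ volume a b) (h₁ : IntervalIntegrable f₁ volume a b)
    (h₂ : IntervalIntegrable f₂ volume a b) (t : ℝ) :
    ∫ x in a..b, (f₀ x + t * f₁ x + t ^ 2 * f₂ x) =
      (∫ x in a..b, f₀ x) + t * (∫ x in a..b, f₁ x) + t ^ 2 * ∫ x in a..b, f₂ x := by
  rw [integral_add (h₀.add (h₁.const_mul t)) (h₂.const_mul _), integral_add h₀ (h₁.const_mul t),
    integral_const_mul, integral_const_mul]

lemma IntervalIntegrable.add_mul_of_continuous {q f h : ℝ → ℝ} {a b : ℝ}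
    (hq : IntervalIntegrable q volume a b) (hf : Continuous f) (hh : Continuous h) :
    IntervalIntegrable (fun x => f x + q x * h x) volume a b :=
  (hf.intervalIntegrable a b).add (hq.mul_continuousOn hh.continuousOn)

section SecondDerivative

variable {𝕜 F : Type*} [NontriviallyNormedField 𝕜] [NormedAddCommGroup F] [NormedSpace 𝕜 F]

lemma ContDiff.continuous_deriv_deriv {u : 𝕜 → F} (hu : ContDiff 𝕜 2 u) :
    Continuous (deriv (deriv u)) :=
  (hu.deriv' (n := 1)).continuous_deriv le_rfl

lemma ContDiff.differentiable_deriv {u : 𝕜 → F} (hu : ContDiff 𝕜 2 u) :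
    Differentiable 𝕜 (deriv u) :=
  (hu.deriv' (n := 1)).differentiable one_ne_zero

lemma deriv_add_const_mul {u v : 𝕜 → 𝕜} (hu : Differentiable 𝕜 u) (hv : Differentiable 𝕜 v)
    (t : 𝕜) : deriv (fun x => u x + t * v x) = fun x => deriv u x + t * deriv v x :=
  funext fun x => ((hu x).hasDerivAt.add ((hv x).hasDerivAt.const_mul t)).deriv

end SecondDerivative

lemma deriv_ofReal_comp {u : ℝ → ℝ} (hu : Differentiable ℝ u) :
    deriv (fun x => (u x : ℂ)) = fun x => ((deriv u x : ℝ) : ℂ) :=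
  funext fun x => (hu x).hasDerivAt.ofReal_comp.deriv

lemma integral_deriv_deriv_mul_sub_mul_deriv_deriv {u v : ℝ → ℝ} (hu : ContDiff ℝ 2 u)
    (hv : ContDiff ℝ 2 v) (a b : ℝ) :
    ∫ x in a..b, (deriv (deriv u) x * v x - u x * deriv (deriv v) x) =
      (deriv u b * v b - u b * deriv v b) - (deriv u a * v a - u a * deriv v a) := by
  have hu1 := hu.differentiable (by norm_num)
  have hv1 := hv.differentiable (by norm_num)
  refine integral_eq_sub_of_hasDerivAt (f := fun x => deriv u x * v x - u x * deriv v x)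
    (fun x _ => ?_) ?_
  · convert ((hu.differentiable_deriv x).hasDerivAt.fun_mul (hv1 x).hasDerivAt).fun_sub
      ((hu1 x).hasDerivAt.fun_mul (hv.differentiable_deriv x).hasDerivAt) using 1
    ring
  · exact ((hu.continuous_deriv_deriv.mul hv.continuous).sub
      (hu.continuous.mul hv.continuous_deriv_deriv)).intervalIntegrable a b

def RealAntiPeriodicBC (u : ℝ → ℝ) : Prop := u 1 = -u 0 ∧ deriv u 1 = -deriv u 0

namespace RealAntiPeriodicBC

lemma add_const_mul {u v : ℝ → ℝ} (hu : RealAntiPeriodicBC u) (hv : RealAntiPeriodicBC v)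
    (hu' : Differentiable ℝ u) (hv' : Differentiable ℝ v) (t : ℝ) :
    RealAntiPeriodicBC (fun x => u x + t * v x) := by
  refine ⟨show u 1 + t * v 1 = -(u 0 + t * v 0) by rw [hu.1, hv.1]; ring, ?_⟩
  rw [deriv_add_const_mul hu' hv']
  show deriv u 1 + t * deriv v 1 = -(deriv u 0 + t * deriv v 0)
  rw [hu.2, hv.2]
  ring

lemma ofReal {u : ℝ → ℝ} (hu : RealAntiPeriodicBC u) (hu' : Differentiable ℝ u) :
    AntiPeriodicBC (fun x => (u x : ℂ)) := by
  refine ⟨show (u 1 : ℂ) = -(u 0 : ℂ) by rw [hu.1, ofReal_neg], ?_⟩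
  rw [deriv_ofReal_comp hu']
  show ((deriv u 1 : ℝ) : ℂ) = -((deriv u 0 : ℝ) : ℂ)
  rw [hu.2, ofReal_neg]

lemma of_tsupport_subset_Ioo {g : ℝ → ℝ} (hg : tsupport g ⊆ Set.Ioo 0 1) :
    RealAntiPeriodicBC g := by
  have h0 : (0:ℝ) ∉ tsupport g := fun h => (hg h).1.false
  have h1 : (1:ℝ) ∉ tsupport g := fun h => (hg h).2.false
  have hd : ∀ x ∉ tsupport g, deriv g x = 0 := fun x hx =>
    Function.notMem_support.mp fun h => hx (support_deriv_subset h)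
  rw [RealAntiPeriodicBC, image_eq_zero_of_notMem_tsupport h0,
    image_eq_zero_of_notMem_tsupport h1, hd 0 h0, hd 1 h1, neg_zero]
  exact ⟨rfl, rfl⟩

lemma integral_deriv_deriv_mul_sub_mul_deriv_deriv {u v : ℝ → ℝ} (hu : RealAntiPeriodicBC u)
    (hv : RealAntiPeriodicBC v) (hu' : ContDiff ℝ 2 u) (hv' : ContDiff ℝ 2 v) :
    ∫ x in (0:ℝ)..1, (deriv (deriv u) x * v x - u x * deriv (deriv v) x) = 0 := by
  rw [_root_.integral_deriv_deriv_mul_sub_mul_deriv_deriv hu' hv', hu.1, hu.2, hv.1, hv.2]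
  ring

end RealAntiPeriodicBC

/-- The eigenfunctions of `-y''` for its lowest anti-periodic eigenvalue `π²` on `[0, 1]`. -/
noncomputable def firstMode (α β x : ℝ) : ℝ := α * Real.sin (π * x) + β * Real.cos (π * x)

section FirstMode

variable (α β : ℝ)

lemma firstMode_eq_norm_mul_sin (x : ℝ) :
    firstMode α β x = ‖(⟨α, β⟩ : ℂ)‖ * Real.sin (π * x + arg ⟨α, β⟩) := by
  have hcos := norm_mul_cos_arg ⟨α, β⟩
  have hsin := norm_mul_sin_arg ⟨α, β⟩
  rw [firstMode, Real.sin_add]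
  linear_combination -Real.sin (π * x) * hcos - Real.cos (π * x) * hsin

lemma hasDerivAt_firstMode (x : ℝ) :
    HasDerivAt (firstMode α β) (π * firstMode (-β) α x) x := by
  have hπx : HasDerivAt (fun x : ℝ => π * x) π x := by simpa using (hasDerivAt_id x).const_mul π
  have h := (((Real.hasDerivAt_sin _).comp x hπx).const_mul α).fun_add
    (((Real.hasDerivAt_cos _).comp x hπx).const_mul β)
  exact h.congr_deriv (by simp only [firstMode]; ring)

lemma deriv_firstMode : deriv (firstMode α β) = fun x => π * firstMode (-β) α x :=
  funext fun x => (hasDerivAt_firstMode α β x).deriv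

lemma deriv_deriv_firstMode :
    deriv (deriv (firstMode α β)) = fun x => -(π ^ 2 * firstMode α β x) := by
  funext x
  rw [deriv_firstMode, deriv_const_mul _ (hasDerivAt_firstMode _ _ x).differentiableAt,
    deriv_firstMode]
  simp only [firstMode]
  ring

lemma contDiff_firstMode {n : WithTop ℕ∞} : ContDiff ℝ n (firstMode α β) := by
  unfold firstMode
  fun_prop

lemma realAntiPeriodicBC_firstMode : RealAntiPeriodicBC (firstMode α β) := by
  have h (a b : ℝ) : firstMode a b 1 = -firstMode a b 0 := by simp [firstMode]
  refine ⟨h α β, ?_⟩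
  rw [deriv_firstMode]
  exact (congrArg (π * ·) (h (-β) α)).trans (mul_neg _ _)

lemma integral_firstMode_sq : ∫ x in (0:ℝ)..1, firstMode α β x ^ 2 = (α ^ 2 + β ^ 2) / 2 := by
  simp_rw [firstMode_eq_norm_mul_sin, mul_pow]
  rw [intervalIntegral.integral_const_mul,
    intervalIntegral.integral_comp_mul_add (fun x => Real.sin x ^ 2) Real.pi_ne_zero,
    integral_sin_sq, Complex.sq_norm, normSq_mk]
  simp [add_comm π, Real.sin_add_pi, Real.cos_add_pi]
  field_simp

lemma countable_setOf_firstMode_eq_zero (h : ¬(α = 0 ∧ β = 0)) :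
    {x | firstMode α β x = 0}.Countable := by
  have hz : (⟨α, β⟩ : ℂ) ≠ 0 := fun hz => h ⟨congrArg re hz, congrArg im hz⟩
  refine (Set.countable_range fun k : ℤ => (k * π - arg ⟨α, β⟩) / π).mono fun x hx => ?_
  rw [Set.mem_ofPred_eq, firstMode_eq_norm_mul_sin, mul_eq_zero, Real.sin_eq_zero_iff] at hx
  obtain ⟨k, hk⟩ := hx.resolve_left (norm_ne_zero_iff.mpr hz)
  exact ⟨k, by field_simp; linarith⟩

end FirstMode

def RayleighLowerBound (q : ℝ → ℝ) (lam0 : ℝ) : Prop :=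
  ∀ y : ℝ → ℂ, ContDiff ℝ 2 y → (∃ x ∈ Set.Icc (0:ℝ) 1, y x ≠ 0) → AntiPeriodicBC y →
    lam0 ≤ rayleighQuotientR q y

noncomputable def energy (q u : ℝ → ℝ) : ℝ :=
  ∫ x in (0:ℝ)..1, (-(u x * deriv (deriv u) x) + q x * u x ^ 2)

lemma rayleighQuotientR_ofReal (q : ℝ → ℝ) {u : ℝ → ℝ} (hu : ContDiff ℝ 2 u) :
    rayleighQuotientR q (fun x => (u x : ℂ)) = energy q u / ∫ x in (0:ℝ)..1, u x ^ 2 := by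
  simp only [rayleighQuotientR, energy, deriv_ofReal_comp (hu.differentiable (by norm_num)),
    deriv_ofReal_comp hu.differentiable_deriv, conj_ofReal, norm_real, Real.norm_eq_abs, sq_abs,
    ← ofReal_neg, ← ofReal_mul, ofReal_re, neg_mul]

lemma exists_energy_add_const_mul_sub_eq {q y g : ℝ → ℝ} (hq : IntervalIntegrable q volume 0 1)
    (hy : ContDiff ℝ 2 y) (hg : ContDiff ℝ 2 g) (hybc : RealAntiPeriodicBC y)
    (hgbc : RealAntiPeriodicBC g) (lam0 : ℝ) :
    ∃ C, ∀ t, energy q (fun x => y x + t * g x) - lam0 * ∫ x in (0:ℝ)..1, (y x + t * g x) ^ 2 =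
      energy q y - lam0 * (∫ x in (0:ℝ)..1, y x ^ 2) +
      t * (2 * ∫ x in (0:ℝ)..1, (-deriv (deriv y) x + q x * y x - lam0 * y x) * g x) +
      t ^ 2 * C := by
  have hyc := hy.continuous
  have hgc := hg.continuous
  have hy2 := hy.continuous_deriv_deriv
  have hg2 := hg.continuous_deriv_deriv
  have hEL : IntervalIntegrable
      (fun x => (-deriv (deriv y) x + q x * y x - lam0 * y x) * g x) volume 0 1 :=
    ((((hy2.neg.intervalIntegrable 0 1).add (hq.mul_continuousOn hyc.continuousOn)).sub
      ((continuous_const.mul hyc).intervalIntegrable 0 1)).mul_continuousOn hgc.continuousOn)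
  have hgreen : IntervalIntegrable
      (fun x => deriv (deriv y) x * g x - y x * deriv (deriv g) x) volume 0 1 :=
    (by fun_prop : Continuous _).intervalIntegrable 0 1
  have hφ (t : ℝ) :
      energy q (fun x => y x + t * g x) - lam0 * ∫ x in (0:ℝ)..1, (y x + t * g x) ^ 2 =
      (∫ x in (0:ℝ)..1, (-(y x * deriv (deriv y) x) - lam0 * y x ^ 2 + q x * y x ^ 2)) +
      t * (2 * ∫ x in (0:ℝ)..1, (-deriv (deriv y) x + q x * y x - lam0 * y x) * g x) +
      t ^ 2 * ∫ x in (0:ℝ)..1, (-(g x * deriv (deriv g) x) - lam0 * g x ^ 2 + q x * g x ^ 2) := by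
    have hE : IntervalIntegrable (fun x => -((y x + t * g x) *
        (deriv (deriv y) x + t * deriv (deriv g) x)) + q x * (y x + t * g x) ^ 2) volume 0 1 :=
      hq.add_mul_of_continuous (by fun_prop) (by fun_prop)
    have hN : IntervalIntegrable (fun x => lam0 * (y x + t * g x) ^ 2) volume 0 1 :=
      (by fun_prop : Continuous _).intervalIntegrable 0 1
    rw [energy,
      deriv_add_const_mul (hy.differentiable (by norm_num)) (hg.differentiable (by norm_num)),
      deriv_add_const_mul hy.differentiable_deriv hg.differentiable_deriv,
      ← intervalIntegral.integral_const_mul, ← intervalIntegral.integral_sub hE hN,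
      intervalIntegral.integral_congr (g := fun x =>
        (-(y x * deriv (deriv y) x) - lam0 * y x ^ 2 + q x * y x ^ 2) +
        t * (2 * ((-deriv (deriv y) x + q x * y x - lam0 * y x) * g x) +
          (deriv (deriv y) x * g x - y x * deriv (deriv g) x)) +
        t ^ 2 * (-(g x * deriv (deriv g) x) - lam0 * g x ^ 2 + q x * g x ^ 2))
        fun x _ => by ring,
      intervalIntegral.integral_add_mul_add_sq_mul
        (hq.add_mul_of_continuous (by fun_prop) (by fun_prop)) ((hEL.const_mul 2).add hgreen)
        (hq.add_mul_of_continuous (by fun_prop) (by fun_prop)),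
      intervalIntegral.integral_add (hEL.const_mul 2) hgreen, intervalIntegral.integral_const_mul,
      hybc.integral_deriv_deriv_mul_sub_mul_deriv_deriv hgbc hy hg, add_zero]
  have hφ0 : energy q y - lam0 * ∫ x in (0:ℝ)..1, y x ^ 2 =
      ∫ x in (0:ℝ)..1, (-(y x * deriv (deriv y) x) - lam0 * y x ^ 2 + q x * y x ^ 2) := by
    simpa using hφ 0
  exact ⟨_, fun t => by rw [hφ t, hφ0]⟩

namespace RayleighLowerBound

variable {q : ℝ → ℝ} {lam0 : ℝ}

lemma mul_integral_sq_le_energy (h : RayleighLowerBound q lam0) {u : ℝ → ℝ}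
    (hu : ContDiff ℝ 2 u) (hbc : RealAntiPeriodicBC u) (hpos : 0 < ∫ x in (0:ℝ)..1, u x ^ 2) :
    lam0 * ∫ x in (0:ℝ)..1, u x ^ 2 ≤ energy q u := by
  have hne : ∃ x ∈ Set.Icc (0:ℝ) 1, (u x : ℂ) ≠ 0 := by
    by_contra! hzero
    have : ∫ x in (0:ℝ)..1, u x ^ 2 = 0 := by
      rw [integral_congr (g := fun _ => 0) fun x hx => by
        simp [ofReal_eq_zero.mp (hzero x (by simpa using hx))]]
      simp
    exact hpos.ne' this
  have : lam0 ≤ rayleighQuotientR q (fun x => (u x : ℂ)) :=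
    h _ (ofRealCLM.contDiff.comp hu) hne (hbc.ofReal (hu.differentiable (by norm_num)))
  rwa [rayleighQuotientR_ofReal q hu, le_div_iff₀ hpos] at this

/-- The Euler–Lagrange equation, in weak form, for a minimiser of the Rayleigh quotient. -/
lemma integral_mul_eq_zero (h : RayleighLowerBound q lam0) (hq : IntervalIntegrable q volume 0 1)
    {y g : ℝ → ℝ} (hy : ContDiff ℝ 2 y) (hybc : RealAntiPeriodicBC y)
    (hpos : 0 < ∫ x in (0:ℝ)..1, y x ^ 2) (hmin : energy q y = lam0 * ∫ x in (0:ℝ)..1, y x ^ 2)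
    (hg : ContDiff ℝ 2 g) (hgbc : RealAntiPeriodicBC g) :
    ∫ x in (0:ℝ)..1, (-deriv (deriv y) x + q x * y x - lam0 * y x) * g x = 0 := by
  obtain ⟨C, hC⟩ := exists_energy_add_const_mul_sub_eq hq hy hg hybc hgbc lam0
  have hcont : Continuous fun t => ∫ x in (0:ℝ)..1, (y x + t * g x) ^ 2 :=
    continuous_parametric_intervalIntegral_of_continuous' (by fun_prop) 0 1
  have hloc : IsLocalMin (fun t : ℝ => t * (2 * ∫ x in (0:ℝ)..1,
      (-deriv (deriv y) x + q x * y x - lam0 * y x) * g x) + t ^ 2 * C) 0 := by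
    filter_upwards [hcont.continuousAt.eventually (lt_mem_nhds (by simpa using hpos))] with t ht
    have := h.mul_integral_sq_le_energy (hy.add (contDiff_const.mul hg))
      (hybc.add_const_mul hgbc (hy.differentiable (by norm_num)) (hg.differentiable (by norm_num)) t)
      ht
    linarith [hC t]
  simpa using eq_zero_of_isLocalMin_quadratic hloc

end RayleighLowerBound

lemma energy_firstMode {q : ℝ → ℝ} (hq : IntervalIntegrable q volume 0 1) (α β : ℝ) :
    energy q (firstMode α β) =
      π ^ 2 * ((α ^ 2 + β ^ 2) / 2) + ∫ x in (0:ℝ)..1, q x * firstMode α β x ^ 2 := by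
  have hc := (contDiff_firstMode α β (n := 0)).continuous
  rw [energy, deriv_deriv_firstMode, ← integral_firstMode_sq, ← intervalIntegral.integral_const_mul,
    ← intervalIntegral.integral_add ((by fun_prop : Continuous _).intervalIntegrable 0 1)
      (hq.mul_continuousOn (by fun_prop : Continuous fun x => firstMode α β x ^ 2).continuousOn)]
  exact intervalIntegral.integral_congr fun x _ => by ring

lemma ae_eq_zero_of_integral_mul_eq_zero {f : ℝ → ℝ} {a b : ℝ} (hab : a ≤ b)
    (hf : IntervalIntegrable f volume a b)
    (h : ∀ g : ℝ → ℝ, ContDiff ℝ ∞ g → tsupport g ⊆ Set.Ioo a b → ∫ x in a..b, f x * g x = 0) :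
    ∀ᵐ x, x ∈ Set.Icc a b → f x = 0 := by
  have hIoo := isOpen_Ioo.ae_eq_zero_of_integral_contDiff_smul_eq_zero
    (hf.1.mono_set Set.Ioo_subset_Ioc_self).locallyIntegrableOn fun g hg _ hgs => by
      calc ∫ x, g x • f x = ∫ x in Set.Ioc a b, g x • f x :=
            (setIntegral_eq_integral_of_forall_compl_eq_zero fun x hx => by
              rw [image_eq_zero_of_notMem_tsupport fun h => hx (Set.Ioo_subset_Ioc_self (hgs h)),
                zero_smul]).symm
        _ = ∫ x in a..b, f x * g x := by
            simp_rw [intervalIntegral.integral_of_le hab, smul_eq_mul, mul_comm]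
        _ = 0 := h g hg hgs
  filter_upwards [hIoo, Ioo_ae_eq_Icc.mem_iff] with x hx hmem using fun hIcc => hx (hmem.mpr hIcc)

theorem ambarzumyan_antiperiodic_general (q : ℝ → ℝ)
    (hq : IntegrableOn q (Set.Icc (0:ℝ) 1))
    (α β : ℝ) (hαβ : ¬(α = 0 ∧ β = 0))
    (lam0 : ℝ)
    (hvar : ∀ y : ℝ → ℂ, ContDiff ℝ 2 y → (∃ x ∈ Set.Icc (0:ℝ) 1, y x ≠ 0) →
      AntiPeriodicBC y → lam0 ≤ rayleighQuotientR q y)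
    (heq : lam0 = Real.pi^2 + (2 / (α^2 + β^2)) *
      ∫ x in (0:ℝ)..1, q x * (α * Real.sin (Real.pi * x) + β * Real.cos (Real.pi * x))^2) :
    ∀ᵐ x, x ∈ Set.Icc (0:ℝ) 1 → q x = (2 / (α^2 + β^2)) *
      ∫ s in (0:ℝ)..1, q s * (α * Real.sin (Real.pi * s) + β * Real.cos (Real.pi * s))^2 := by
  change lam0 = π ^ 2 + (2 / (α ^ 2 + β ^ 2)) * ∫ x in (0:ℝ)..1, q x * firstMode α β x ^ 2 at heq
  change ∀ᵐ x, x ∈ Set.Icc (0:ℝ) 1 → q x = (2 / (α ^ 2 + β ^ 2)) *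
    ∫ x in (0:ℝ)..1, q x * firstMode α β x ^ 2
  have hr : 0 < α ^ 2 + β ^ 2 := by rcases not_and_or.mp hαβ with h | h <;> positivity
  have hqI : IntervalIntegrable q volume 0 1 :=
    (intervalIntegrable_iff_integrableOn_Icc_of_le zero_le_one).mpr hq
  have hnorm := integral_firstMode_sq α β
  have hmin : energy q (firstMode α β) = lam0 * ∫ x in (0:ℝ)..1, firstMode α β x ^ 2 := by
    rw [energy_firstMode hqI, hnorm, heq]
    field_simp
  set c := (2 / (α ^ 2 + β ^ 2)) * ∫ x in (0:ℝ)..1, q x * firstMode α β x ^ 2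
  have hweak (g : ℝ → ℝ) (hg : ContDiff ℝ ∞ g) (hgs : tsupport g ⊆ Set.Ioo 0 1) :
      ∫ x in (0:ℝ)..1, (q x - c) * firstMode α β x * g x = 0 := by
    refine (intervalIntegral.integral_congr fun x _ => ?_).trans
      (RayleighLowerBound.integral_mul_eq_zero hvar hqI (contDiff_firstMode α β)
        (realAntiPeriodicBC_firstMode α β) (by rw [hnorm]; positivity) hmin
        (hg.of_le (WithTop.coe_le_coe.mpr le_top)) (.of_tsupport_subset_Ioo hgs))
    rw [deriv_deriv_firstMode, heq]
    ring
  have hae := ae_eq_zero_of_integral_mul_eq_zero zero_le_one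
    ((hqI.sub intervalIntegrable_const).mul_continuousOn
      (contDiff_firstMode α β (n := 0)).continuous.continuousOn) hweak
  filter_upwards [hae, (countable_setOf_firstMode_eq_zero α β hαβ).ae_notMem volume]
    with x hx hx0 hmem
  exact sub_eq_zero.mp ((mul_eq_zero.mp (hx hmem)).resolve_right hx0)

/-- Yurko, Theorem 2(b): anti-periodic problem. If the first eigenvalue
`λ₀ = π² + (2/(α²+β²)) ∫₀¹ q (α sin πx + β cos πx)²`, with `(α,β) ≠ (0,0)`, then `q` is
a.e. equal to that weighted mean. -/
theorem ambarzumyan_antiperiodic (q : ℝ → ℝ)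
    (hq : IntegrableOn q (Set.Icc (0:ℝ) 1))
    (α β : ℝ) (hαβ : ¬(α = 0 ∧ β = 0))
    (lam0 : ℝ) (hfirst : IsFirstEigenvalue q lam0)
    (hvar : ∀ y : ℝ → ℂ, ContDiff ℝ 2 y → (∃ x ∈ Set.Icc (0:ℝ) 1, y x ≠ 0) →
      AntiPeriodicBC y → lam0 ≤ rayleighQuotientR q y)
    (heq : lam0 = Real.pi^2 + (2 / (α^2 + β^2)) *
      ∫ x in (0:ℝ)..1, q x * (α * Real.sin (Real.pi * x) + β * Real.cos (Real.pi * x))^2) :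
    ∀ᵐ x, x ∈ Set.Icc (0:ℝ) 1 → q x = (2 / (α^2 + β^2)) *
      ∫ s in (0:ℝ)..1, q s * (α * Real.sin (Real.pi * s) + β * Real.cos (Real.pi * s))^2 :=
  ambarzumyan_antiperiodic_general q hq α β hαβ lam0 hvar heq
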